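/- Under the additional flows, for all integers m, m′ ≥ 0 and p, p′ ∈ ℤ, with β̇_{mp} = β_{mp} or β̂_{mp} corresponding to Ḃ_{mp} = B_{mp} or B̂_{mp} respectively: ∂ψ(z)/∂β̇_{mp} = −(Ḃ_{mp})₋ ψ(z) and ∂ψ̂(z)/∂β̇_{mp} = (Ḃ_{mp})₊ ψ̂(z); ∂P/∂β̇_{mp} = [−(Ḃ_{mp})₋, P] and ∂P̂/∂β̇_{mp} = [(Ḃ_{mp})₊, P̂]; ∂M/∂β̇_{mp} = [−(Ḃ_{mp})₋, M] and ∂M̂/∂β̇_{mp} = [(Ḃ_{mp})₊, M̂]; ∂B_{m′p′}/∂β̇_{mp} = [−(Ḃ_{mp})₋, B_{m′p′}] and ∂B̂_{m′p′}/∂β̇_{mp} = [(Ḃ_{mp})₊, B̂_{m′p′}]. -/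

import Mathlib

/-!
Each additional flow acts on operators as a map `d` obeying the Leibniz rule, and dresses
`Φ` by `d Φ = X Φ` while killing the undressed data `∂`, `Ξ`, `Ξ̂` and the free waves.
The map `a ↦ d a - [X, a]` again obeys the Leibniz rule, so its kernel is a submonoid that
contains with every unit its inverse, hence all integer powers. Differentiating `Φ a Φ⁻¹`
puts every dressed operator `P`, `M` in that kernel, and therefore also
`B_{mp} = M^m P^p`. On waves, `d (Φ E) = (d Φ) E = X Φ E`.
-/

section Leibniz

variable {D : Type*} [Ring D] {d : D → D}

abbrev IsLeibniz (d : D → D) : Prop :=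
  ∀ x y, d (x * y) = d x * y + x * d y

theorem IsLeibniz.map_one (hd : IsLeibniz d) : d 1 = 0 := by
  simpa using hd 1 1

theorem IsLeibniz.map_units_inv (hd : IsLeibniz d) (u : Dˣ) :
    d ↑u⁻¹ = -(↑u⁻¹ * d u * ↑u⁻¹) := by
  have h := hd u ↑u⁻¹
  rw [Units.mul_inv, hd.map_one] at h
  calc d ↑u⁻¹ = ↑u⁻¹ * (u * d ↑u⁻¹) := by rw [← mul_assoc, Units.inv_mul, one_mul]
    _ = -(↑u⁻¹ * d u * ↑u⁻¹) := by
      rw [eq_neg_of_add_eq_zero_right h.symm]; noncomm_ring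

theorem IsLeibniz.map_units_inv_eq_zero (hd : IsLeibniz d) {u : Dˣ}
    (hu : d u = 0) : d ↑u⁻¹ = 0 := by
  simp [hd.map_units_inv, hu]

theorem IsLeibniz.sub_commutator (hd : IsLeibniz d) (X : D) :
    IsLeibniz fun a => d a - (X * a - a * X) := by
  intro x y
  simp only [hd x y]
  noncomm_ring

def leibnizKer (d : D → D) (hd : IsLeibniz d) : Submonoid D where
  carrier := {a | d a = 0}
  one_mem' := hd.map_one
  mul_mem' {a b} (ha : d a = 0) (hb : d b = 0) := by
    show d (a * b) = 0
    rw [hd a b, ha, hb, zero_mul, mul_zero, add_zero]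

theorem units_zpow_mem_leibnizKer (hd : IsLeibniz d) {u : Dˣ}
    (hu : (u : D) ∈ leibnizKer d hd) (p : ℤ) : ((u ^ p : Dˣ) : D) ∈ leibnizKer d hd := by
  have hunit : u ∈ (leibnizKer d hd).units :=
    ((leibnizKer d hd).mem_units_iff u).2 ⟨hu, hd.map_units_inv_eq_zero hu⟩
  exact (((leibnizKer d hd).mem_units_iff _).1 (zpow_mem hunit p)).1

def laxSubmonoid (hd : IsLeibniz d) (X : D) : Submonoid D :=
  leibnizKer (fun a => d a - (X * a - a * X)) (hd.sub_commutator X)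

theorem mem_laxSubmonoid {hd : IsLeibniz d} {X a : D} :
    a ∈ laxSubmonoid hd X ↔ d a = X * a - a * X :=
  sub_eq_zero

theorem conj_mem_laxSubmonoid (hd : IsLeibniz d) {X a : D} {Φ : Dˣ} (hΦ : d Φ = X * Φ)
    (ha : d a = 0) : ↑Φ * a * ↑Φ⁻¹ ∈ laxSubmonoid hd X := by
  have hΦinv : d ↑Φ⁻¹ = -(↑Φ⁻¹ * X) := by
    rw [hd.map_units_inv, hΦ, mul_assoc, mul_assoc, Units.mul_inv, mul_one]
  rw [mem_laxSubmonoid, hd, hd, hΦ, ha, hΦinv]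
  noncomm_ring

theorem dressing_mem_laxSubmonoid (hd : IsLeibniz d) {X Ξ : D} {Φ δ : Dˣ} (hδ : d δ = 0)
    (hΞ : d Ξ = 0) (hΦ : d Φ = X * Φ) :
    ((Φ * δ * Φ⁻¹ : Dˣ) : D) ∈ laxSubmonoid hd X ∧
      ↑Φ * Ξ * ↑Φ⁻¹ ∈ laxSubmonoid hd X ∧
      ∀ (m : ℕ) (p : ℤ), (↑Φ * Ξ * ↑Φ⁻¹) ^ m * (((Φ * δ * Φ⁻¹) ^ p : Dˣ) : D) ∈
        laxSubmonoid hd X := by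
  have hP : ((Φ * δ * Φ⁻¹ : Dˣ) : D) ∈ laxSubmonoid hd X := by
    simpa only [Units.val_mul] using conj_mem_laxSubmonoid hd hΦ hδ
  have hM := conj_mem_laxSubmonoid hd hΦ hΞ
  exact ⟨hP, hM, fun m p =>
    mul_mem (pow_mem hM m) (units_zpow_mem_leibnizKer _ hP p)⟩

end Leibniz

theorem act_dressing_flow {D W : Type*} [Ring D] [AddCommGroup W] {act : D → W → W}
    (hact_addw : ∀ x w w', act x (w + w') = act x w + act x w')
    (hact_mul : ∀ x y w, act (x * y) w = act x (act y w)) {dD : D → D} {dW : W → W}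
    (hleib : ∀ x w, dW (act x w) = act (dD x) w + act x (dW w)) {E : W} {X Φ : D}
    (hE : dW E = 0) (hΦ : dD Φ = X * Φ) : dW (act Φ E) = act X (act Φ E) := by
  have hact_zero : act Φ 0 = 0 := (AddMonoidHom.mk' (act Φ) (hact_addw Φ)).map_zero
  rw [hleib, hE, hact_zero, add_zero, hΦ, hact_mul]

theorem stmt_14 {D : Type*} [Ring D]
    {W : Type*} [AddCommGroup W]
    (pos neg : D → D)
    (del Φ Φh : Dˣ)
    -- the operators Ξ and Ξ̂ entering M = ΦΞΦ⁻¹ and M̂ = Φ̂Ξ̂Φ̂⁻¹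
    (Ξ Ξh : D)
    -- wave functions
    (act : D → W → W)
    (hact_add : ∀ x y w, act (x + y) w = act x w + act y w)
    (hact_addw : ∀ x w w', act x (w + w') = act x w + act x w')
    (hact_mul : ∀ x y w, act (x * y) w = act x (act y w))
    (E Eh : W)
    -- the additional flows on operators and on wave functions
    (S Sh : ℕ → ℤ → D → D) (Sw Shw : ℕ → ℤ → W → W)
    (hS_mul : ∀ m p x y, S m p (x * y) = S m p x * y + x * S m p y)
    (hS_del : ∀ m p, S m p (del : D) = 0)
    (hS_Ξ : ∀ m p, S m p Ξ = 0) (hS_Ξh : ∀ m p, S m p Ξh = 0)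
    (hSh_mul : ∀ m p x y, Sh m p (x * y) = Sh m p x * y + x * Sh m p y)
    (hSh_del : ∀ m p, Sh m p (del : D) = 0)
    (hSh_Ξ : ∀ m p, Sh m p Ξ = 0) (hSh_Ξh : ∀ m p, Sh m p Ξh = 0)
    (hSw_leib : ∀ m p x w, Sw m p (act x w) = act (S m p x) w + act x (Sw m p w))
    (hShw_leib : ∀ m p x w,
      Shw m p (act x w) = act (Sh m p x) w + act x (Shw m p w))
    (hSw_E : ∀ m p, Sw m p E = 0) (hSw_Eh : ∀ m p, Sw m p Eh = 0)
    (hShw_E : ∀ m p, Shw m p E = 0) (hShw_Eh : ∀ m p, Shw m p Eh = 0) :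
    let P : Dˣ := Φ * del * Φ⁻¹
    let Ph : Dˣ := Φh * del⁻¹ * Φh⁻¹
    let M : D := (Φ : D) * Ξ * ((Φ⁻¹ : Dˣ) : D)
    let Mh : D := (Φh : D) * Ξh * ((Φh⁻¹ : Dˣ) : D)
    let Bop : ℕ → ℤ → D := fun m p => M ^ m * ((P ^ p : Dˣ) : D)
    let Bhop : ℕ → ℤ → D := fun m p => Mh ^ m * ((Ph ^ (-p) : Dˣ) : D)
    let ψ : W := act (Φ : D) E
    let ψh : W := act (Φh : D) Eh
    -- the additional flows of the dressing operators:
    (∀ (m : ℕ) (p : ℤ), S m p (Φ : D) = -(neg (Bop m p)) * (Φ : D)) →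
    (∀ (m : ℕ) (p : ℤ), S m p (Φh : D) = pos (Bop m p) * (Φh : D)) →
    (∀ (m : ℕ) (p : ℤ), Sh m p (Φ : D) = -(neg (Bhop m p)) * (Φ : D)) →
    (∀ (m : ℕ) (p : ℤ), Sh m p (Φh : D) = pos (Bhop m p) * (Φh : D)) →
    -- conclusions, for Ḃ = B (flows S = ∂/∂β) and Ḃ = B̂ (flows Sh = ∂/∂β̂):
    (∀ (m : ℕ) (p : ℤ),
      -- on the Baker–Akhiezer functions
      (Sw m p ψ = -(act (neg (Bop m p)) ψ) ∧
       Shw m p ψ = -(act (neg (Bhop m p)) ψ) ∧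
       Sw m p ψh = act (pos (Bop m p)) ψh ∧
       Shw m p ψh = act (pos (Bhop m p)) ψh) ∧
      -- on P and P̂
      (S m p (P : D) = -(neg (Bop m p)) * (P : D) - (P : D) * -(neg (Bop m p)) ∧
       Sh m p (P : D)
         = -(neg (Bhop m p)) * (P : D) - (P : D) * -(neg (Bhop m p)) ∧
       S m p (Ph : D) = pos (Bop m p) * (Ph : D) - (Ph : D) * pos (Bop m p) ∧
       Sh m p (Ph : D)
         = pos (Bhop m p) * (Ph : D) - (Ph : D) * pos (Bhop m p)) ∧
      -- on M and M̂
      (S m p M = -(neg (Bop m p)) * M - M * -(neg (Bop m p)) ∧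
       Sh m p M = -(neg (Bhop m p)) * M - M * -(neg (Bhop m p)) ∧
       S m p Mh = pos (Bop m p) * Mh - Mh * pos (Bop m p) ∧
       Sh m p Mh = pos (Bhop m p) * Mh - Mh * pos (Bhop m p)) ∧
      -- on B_{m′p′} and B̂_{m′p′}
      (∀ (m' : ℕ) (p' : ℤ),
       S m p (Bop m' p')
         = -(neg (Bop m p)) * Bop m' p' - Bop m' p' * -(neg (Bop m p)) ∧
       Sh m p (Bop m' p')
         = -(neg (Bhop m p)) * Bop m' p' - Bop m' p' * -(neg (Bhop m p)) ∧
       S m p (Bhop m' p')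
         = pos (Bop m p) * Bhop m' p' - Bhop m' p' * pos (Bop m p) ∧
       Sh m p (Bhop m' p')
         = pos (Bhop m p) * Bhop m' p' - Bhop m' p' * pos (Bhop m p))) := by
  intro P Ph M Mh Bop Bhop ψ ψh hSΦ hSΦh hShΦ hShΦh m p
  obtain ⟨hSP, hSM, hSB⟩ :=
    dressing_mem_laxSubmonoid (hS_mul m p) (hS_del m p) (hS_Ξ m p) (hSΦ m p)
  obtain ⟨hSPh, hSMh, hSBh⟩ := dressing_mem_laxSubmonoid (hS_mul m p)
    (IsLeibniz.map_units_inv_eq_zero (hS_mul m p) (hS_del m p)) (hS_Ξh m p) (hSΦh m p)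
  obtain ⟨hShP, hShM, hShB⟩ :=
    dressing_mem_laxSubmonoid (hSh_mul m p) (hSh_del m p) (hSh_Ξ m p) (hShΦ m p)
  obtain ⟨hShPh, hShMh, hShBh⟩ := dressing_mem_laxSubmonoid (hSh_mul m p)
    (IsLeibniz.map_units_inv_eq_zero (hSh_mul m p) (hSh_del m p)) (hSh_Ξh m p) (hShΦh m p)
  simp only [mem_laxSubmonoid] at *
  have wave := @act_dressing_flow D W _ _ act hact_addw hact_mul
  have act_neg : ∀ x w, act (-x) w = -act x w := fun x w =>
    (AddMonoidHom.mk' (act · w) (hact_add · · w)).map_neg x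
  refine ⟨⟨?_, ?_, wave (hSw_leib m p) (hSw_Eh m p) (hSΦh m p),
      wave (hShw_leib m p) (hShw_Eh m p) (hShΦh m p)⟩,
    ⟨hSP, hShP, hSPh, hShPh⟩, ⟨hSM, hShM, hSMh, hShMh⟩,
    fun m' p' => ⟨hSB m' p', hShB m' p', hSBh m' (-p'), hShBh m' (-p')⟩⟩
  · exact (wave (hSw_leib m p) (hSw_E m p) (hSΦ m p)).trans (act_neg _ _)
  · exact (wave (hShw_leib m p) (hShw_E m p) (hShΦ m p)).trans (act_neg _ _)
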